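/- arXiv:1305.3285 — 4 statements merged into one kernel-verified Lean document; each statement's English description precedes it below -/
import Mathlib

section
/- If α₁, α₂, α₃ are the roots of x³ - px² - qx - r, then the characteristic polynomial of the matrix N = [[z, r, pr], [0, q+z, pq+r], [1, p, p²+q+z]] equals (x-(z+α₁²))(x-(z+α₂²))(x-(z+α₃²)). -/
/-!
`N = C² + z • 1`, where `C` is the companion matrix of `x³ - px² - qx - r`, so the eigenvalues of
`C` are the `αᵢ`. Those of `C²` are the `αᵢ²`, with multiplicity, because
`det (X² - C²) = det (X - C) · det (X + C)` for commuting `X` and `C`; adding `z • 1` shifts them by `z`.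
-/

open Polynomial

theorem Polynomial.neg_one_pow_card_mul_prod_X_sub_C_comp_neg_X {R : Type*} [CommRing R]
    (s : Multiset R) :
    (-1) ^ Multiset.card s * (s.map fun a => X - C a).prod.comp (-X) =
      (s.map fun a => X + C a).prod := by
  induction s using Multiset.induction_on with
  | empty => simp
  | cons a s ih =>
    simp only [Multiset.map_cons, Multiset.prod_cons, Multiset.card_cons, mul_comp, sub_comp,
      X_comp, C_comp, ← ih]
    ring

theorem Polynomial.prod_X_sub_C_mul_prod_X_add_C {R : Type*} [CommRing R] (s : Multiset R) :
    (s.map fun a => X - C a).prod * (s.map fun a => X + C a).prod =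
      expand R 2 (s.map fun a => X - C (a ^ 2)).prod := by
  rw [← Multiset.prod_map_mul, map_multiset_prod, Multiset.map_map]
  refine congrArg _ (Multiset.map_congr rfl fun a _ => ?_)
  simp only [Function.comp_apply, map_sub, expand_X, expand_C, map_pow]
  ring

namespace Matrix
variable {n R : Type*} [Fintype n] [DecidableEq n] [CommRing R]

theorem charmatrix_neg (A : Matrix n n R) :
    charmatrix (-A) = -(charmatrix A).map (compRingHom (-X)) := by
  ext i j : 1
  by_cases h : i = j
  · subst h
    simp only [charmatrix_apply_eq, neg_apply, map_neg, sub_neg_eq_add, coe_compRingHom,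
      map_apply, sub_comp, X_comp, C_comp, neg_sub]
    ring
  · simp [h]

theorem charpoly_neg (A : Matrix n n R) :
    (-A).charpoly = (-1) ^ Fintype.card n * A.charpoly.comp (-X) := by
  rw [charpoly, charmatrix_neg, det_neg, ← coe_compRingHom_apply]
  exact congrArg _ (RingHom.map_det _ _).symm

theorem charmatrix_map_expand (A : Matrix n n R) (k : ℕ) :
    (charmatrix A).map (expand R k) = scalar n (X ^ k) - (C : R →+* R[X]).mapMatrix A := by
  ext i j : 1
  by_cases h : i = j
  · subst h; simp
  · simp [h]

theorem charmatrix_mul_charmatrix_neg (A : Matrix n n R) :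
    charmatrix A * charmatrix (-A) = (charmatrix (A ^ 2)).map (expand R 2) := by
  have hX : Commute (scalar n (X : R[X])) ((C : R →+* R[X]).mapMatrix A) :=
    scalar_commute _ (fun _ => commute_X _) _
  rw [charmatrix_map_expand, charmatrix, charmatrix, map_neg, map_pow, map_pow, sub_neg_eq_add,
    sq, sq, hX.mul_self_sub_mul_self_eq']

theorem expand_charpoly_sq (A : Matrix n n R) :
    expand R 2 (A ^ 2).charpoly = A.charpoly * (-A).charpoly := by
  rw [charpoly, charpoly, charpoly, ← det_mul, charmatrix_mul_charmatrix_neg]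
  exact RingHom.map_det _ _

theorem charpoly_add_scalar (A : Matrix n n R) (z : R) :
    (A + scalar n z).charpoly = A.charpoly.comp (X - C z) := by
  rw [← sub_neg_eq_add, ← map_neg, charpoly_sub_scalar, map_neg, ← sub_eq_add_neg]

theorem charpoly_sq_of_charpoly_eq_prod [Nontrivial R] {A : Matrix n n R} {s : Multiset R}
    (h : A.charpoly = (s.map fun a => X - C a).prod) :
    (A ^ 2).charpoly = (s.map fun a => X - C (a ^ 2)).prod := by
  have hcard : Fintype.card n = Multiset.card s := by
    rw [← A.charpoly_natDegree_eq_dim, h, natDegree_multiset_prod_X_sub_C_eq_card]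
  apply expand_injective two_pos
  rw [expand_charpoly_sq, charpoly_neg, hcard, h, neg_one_pow_card_mul_prod_X_sub_C_comp_neg_X,
    prod_X_sub_C_mul_prod_X_add_C]

end Matrix

section CubicCompanion

variable {R : Type*} [CommRing R] (p q r : R)

def cubicCompanion : Matrix (Fin 3) (Fin 3) R :=
  !![0, 0, r; 1, 0, q; 0, 1, p]

theorem cubicCompanion_charpoly :
    (cubicCompanion p q r).charpoly = X ^ 3 - C p * X ^ 2 - C q * X - C r := by
  rw [Matrix.charpoly, Matrix.det_fin_three]
  simp [cubicCompanion]
  ring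

theorem cubicCompanion_sq :
    cubicCompanion p q r ^ 2 = !![0, r, p * r; 0, q, p * q + r; 1, p, p ^ 2 + q] := by
  rw [sq, cubicCompanion, Matrix.mul_fin_three]
  simp only [zero_mul, mul_zero, one_mul, mul_one, zero_add, add_zero]
  rw [mul_comm r p, mul_comm q p, add_comm r, ← sq, add_comm q]

end CubicCompanion

theorem charpoly_N_roots (p q r z : ℂ) (α₁ α₂ α₃ : ℂ)
    (h : ∀ x : ℂ, x^3 - p*x^2 - q*x - r = (x - α₁)*(x - α₂)*(x - α₃)) :
    Matrix.charpoly (!![z, r, p*r; 0, q+z, p*q+r; 1, p, p^2+q+z] : Matrix (Fin 3) (Fin 3) ℂ)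
      = (X - C (z + α₁^2)) * (X - C (z + α₂^2)) * (X - C (z + α₃^2)) := by
  have hN : (!![z, r, p*r; 0, q+z, p*q+r; 1, p, p^2+q+z] : Matrix (Fin 3) (Fin 3) ℂ) =
      cubicCompanion p q r ^ 2 + Matrix.scalar (Fin 3) z := by
    rw [cubicCompanion_sq]
    ext i j
    fin_cases i <;> fin_cases j <;> simp [add_comm]
  have hC : (cubicCompanion p q r).charpoly =
      (({α₁, α₂, α₃} : Multiset ℂ).map fun a => X - C a).prod := by
    rw [cubicCompanion_charpoly]
    refine Polynomial.funext fun x => ?_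
    simpa [mul_assoc] using h x
  rw [hN, Matrix.charpoly_add_scalar, Matrix.charpoly_sq_of_charpoly_eq_prod hC]
  simp only [Multiset.insert_eq_cons, Multiset.map_cons, Multiset.map_singleton,
    Multiset.prod_cons, Multiset.prod_singleton, mul_comp, sub_comp, X_comp, C_comp, map_add]
  ring
end

section
/- For every n ≥ 0, the n-th power of the matrix N = [[z, r, pr], [0, q+z, pq+r], [1, p, p²+q+z]] equals [[μₙ⁰, r·μₙ², r·μₙ¹ + pr·μₙ²], [μₙ¹, μₙ⁰ + q·μₙ², (pq+r)·μₙ² + q·μₙ¹], [μₙ², μₙ¹ + p·μₙ², μₙ⁰ + p·μₙ¹ + (p²+q)·μₙ²]], where μₙ⁰, μₙ¹, μₙ² are defined by the expansion (z+α²)ⁿ = μₙ⁰ + μₙ¹·α + μₙ²·α² in ℚ[α] = ℚ[x]/(x³-px²-qx-r) assuming x³-px²-qx-r is irreducible over ℚ. -/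
/-!
Both sides are matrices of multiplication maps on `ℚ[α]` in the basis `1, α, α²`: multiplication
by `a + bα + cα²` has the matrix on the right with `(a, b, c)` in place of `(μₙ⁰, μₙ¹, μₙ²)`, and `N`
is the case `z + α²`. Since taking the matrix of multiplication is a ring homomorphism, `Nⁿ` is the
matrix of multiplication by `(z + α²)ⁿ = μₙ⁰ + μₙ¹α + μₙ²α²`.
-/

section Cubic

open Polynomial

variable {R : Type*} [CommRing R] (p q r : R)

local notation "α" => AdjoinRoot.root (X ^ 3 - C p * X ^ 2 - C q * X - C r : R[X])
local notation "ι" => algebraMap R (AdjoinRoot (X ^ 3 - C p * X ^ 2 - C q * X - C r : R[X]))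

lemma cubic_monic : (X ^ 3 - C p * X ^ 2 - C q * X - C r : R[X]).Monic := by
  monicity!

lemma cubic_natDegree [Nontrivial R] :
    (X ^ 3 - C p * X ^ 2 - C q * X - C r : R[X]).natDegree = 3 := by
  compute_degree!

noncomputable def cubicBasis [Nontrivial R] :
    Module.Basis (Fin 3) R (AdjoinRoot (X ^ 3 - C p * X ^ 2 - C q * X - C r : R[X])) :=
  (AdjoinRoot.powerBasis' (cubic_monic p q r)).basis.reindex (finCongr (cubic_natDegree p q r))

lemma cubicBasis_apply [Nontrivial R] (i : Fin 3) : cubicBasis p q r i = α ^ (i : ℕ) := by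
  simp only [cubicBasis, Module.Basis.reindex_apply, PowerBasis.basis_eq_pow]
  rfl

lemma cubicBasis_repr [Nontrivial R] (a b c : R) :
    (cubicBasis p q r).repr (ι a + ι b * α + ι c * α ^ 2) = ![a, b, c] := by
  have h : ι a + ι b * α + ι c * α ^ 2 = (cubicBasis p q r).equivFun.symm ![a, b, c] := by
    simp [Module.Basis.equivFun_symm_apply, Fin.sum_univ_three, cubicBasis_apply, Algebra.smul_def]
  rw [h, ← Module.Basis.equivFun_apply, LinearEquiv.apply_symm_apply]

lemma root_cubic_pow_three : α ^ 3 = ι p * α ^ 2 + ι q * α + ι r := by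
  have h := AdjoinRoot.mk_self (f := (X ^ 3 - C p * X ^ 2 - C q * X - C r : R[X]))
  simp only [map_sub, map_mul, map_pow, AdjoinRoot.mk_X, AdjoinRoot.mk_C,
    ← AdjoinRoot.algebraMap_eq] at h
  linear_combination h

lemma mul_root_cubic (a b c : R) :
    (ι a + ι b * α + ι c * α ^ 2) * α = ι (r * c) + ι (a + q * c) * α + ι (b + p * c) * α ^ 2 := by
  simp only [map_add, map_mul]
  linear_combination ι c * root_cubic_pow_three p q r

lemma leftMulMatrix_cubicBasis [Nontrivial R] (a b c : R) :
    Algebra.leftMulMatrix (cubicBasis p q r) (ι a + ι b * α + ι c * α ^ 2) =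
      !![a, r * c, r * b + p * r * c;
         b, a + q * c, (p * q + r) * c + q * b;
         c, b + p * c, a + p * b + (p ^ 2 + q) * c] := by
  ext i j
  rw [Algebra.leftMulMatrix_eq_repr_mul, cubicBasis_apply]
  fin_cases j
  · rw [Fin.zero_eta, Fin.val_zero, pow_zero, mul_one, cubicBasis_repr]
    fin_cases i <;> rfl
  · rw [Fin.mk_one, Fin.val_one, pow_one, mul_root_cubic, cubicBasis_repr]
    fin_cases i <;> rfl
  · rw [show ((⟨2, by omega⟩ : Fin 3) : ℕ) = 1 + 1 from rfl, pow_add, pow_one, ← mul_assoc,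
      mul_root_cubic, mul_root_cubic, cubicBasis_repr]
    fin_cases i <;> simp only [Fin.isValue, Fin.reduceFinMk, Matrix.of_apply, Matrix.cons_val',
      Matrix.cons_val, Matrix.cons_val_fin_one] <;> ring

end Cubic

open Polynomial in
theorem pow_N_eq_cerruti_general (p q r z : ℚ)
    (μ0 μ1 μ2 : ℕ → ℚ)
    (hμ : ∀ n : ℕ,
      (algebraMap ℚ (AdjoinRoot (X^3 - C p * X^2 - C q * X - C r : ℚ[X])) z
          + (AdjoinRoot.root (X^3 - C p * X^2 - C q * X - C r : ℚ[X]))^2)^n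
        = algebraMap ℚ _ (μ0 n)
          + algebraMap ℚ _ (μ1 n) * AdjoinRoot.root (X^3 - C p * X^2 - C q * X - C r : ℚ[X])
          + algebraMap ℚ _ (μ2 n) * (AdjoinRoot.root (X^3 - C p * X^2 - C q * X - C r : ℚ[X]))^2) :
    ∀ n : ℕ,
      (!![z, r, p*r; 0, q+z, p*q+r; 1, p, p^2+q+z] : Matrix (Fin 3) (Fin 3) ℚ)^n
        = !![μ0 n, r * μ2 n, r * μ1 n + p*r * μ2 n;
             μ1 n, μ0 n + q * μ2 n, (p*q+r) * μ2 n + q * μ1 n;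
             μ2 n, μ1 n + p * μ2 n, μ0 n + p * μ1 n + (p^2+q) * μ2 n] := by
  intro n
  have hN : (!![z, r, p*r; 0, q+z, p*q+r; 1, p, p^2+q+z] : Matrix (Fin 3) (Fin 3) ℚ) =
      Algebra.leftMulMatrix (cubicBasis p q r)
        (algebraMap ℚ _ z + algebraMap ℚ _ 0 * AdjoinRoot.root _ +
          algebraMap ℚ _ 1 * AdjoinRoot.root _ ^ 2) := by
    rw [leftMulMatrix_cubicBasis]
    simp only [mul_zero, mul_one, zero_add, add_zero, add_comm z]
  rw [hN, ← map_pow, map_zero, map_one, zero_mul, add_zero, one_mul, hμ n,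
    leftMulMatrix_cubicBasis]

open Polynomial in
theorem pow_N_eq_cerruti (p q r z : ℚ)
    (hf : Irreducible (X^3 - C p * X^2 - C q * X - C r : ℚ[X]))
    (μ0 μ1 μ2 : ℕ → ℚ)
    (hμ : ∀ n : ℕ,
      (algebraMap ℚ (AdjoinRoot (X^3 - C p * X^2 - C q * X - C r : ℚ[X])) z
          + (AdjoinRoot.root (X^3 - C p * X^2 - C q * X - C r : ℚ[X]))^2)^n
        = algebraMap ℚ _ (μ0 n)
          + algebraMap ℚ _ (μ1 n) * AdjoinRoot.root (X^3 - C p * X^2 - C q * X - C r : ℚ[X])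
          + algebraMap ℚ _ (μ2 n) * (AdjoinRoot.root (X^3 - C p * X^2 - C q * X - C r : ℚ[X]))^2) :
    ∀ n : ℕ,
      (!![z, r, p*r; 0, q+z, p*q+r; 1, p, p^2+q+z] : Matrix (Fin 3) (Fin 3) ℚ)^n
        = !![μ0 n, r * μ2 n, r * μ1 n + p*r * μ2 n;
             μ1 n, μ0 n + q * μ2 n, (p*q+r) * μ2 n + q * μ1 n;
             μ2 n, μ1 n + p * μ2 n, μ0 n + p * μ1 n + (p^2+q) * μ2 n] :=
  pow_N_eq_cerruti_general p q r z μ0 μ1 μ2 hμ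
end

section
/- The Cerruti coordinate sequences μₙ⁰, μₙ¹, μₙ² each satisfy the linear recurrence sₙ₊₃ = Tr(N)·sₙ₊₂ - I₁(N)·sₙ₊₁ + det(N)·sₙ, where Tr(N) = p²+2q+3z, I₁(N) = q²-2pr+2p²z+4qz+3z², and det(N) = r²+q²z-2prz+p²z²+2qz²+z³. -/
/-!
The root α of the cubic satisfies α³ = pα² + qα + r, so β = z + α² is a root of the
characteristic polynomial of multiplication by β, the cubic with coefficients Tr(N), I₁(N),
det(N); multiplying that cubic by βⁿ gives the recurrence for the powers βⁿ. Since
1, α, α² are linearly independent over ℚ, the recurrence passes to the coordinates of βⁿ.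
-/

open Polynomial

theorem LinearIndependent.coord_linear_recurrence {ι R M : Type*} [Fintype ι] [CommRing R]
    [AddCommGroup M] [Module R M] {v : ι → M} (hv : LinearIndependent R v)
    {x : ℕ → M} {μ : ι → ℕ → R} (hx : ∀ n, x n = ∑ i, μ i n • v i) {a b c : R} {n : ℕ}
    (hrec : x (n + 3) = a • x (n + 2) - b • x (n + 1) + c • x n) (i : ι) :
    μ i (n + 3) = a * μ i (n + 2) - b * μ i (n + 1) + c * μ i n := by
  refine Fintype.linearIndependent_iffₛ.1 hv (μ · (n + 3))
    (fun i => a * μ i (n + 2) - b * μ i (n + 1) + c * μ i n) ?_ i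
  simp only [← hx, hrec, add_smul, sub_smul, mul_smul, Finset.sum_add_distrib,
    Finset.sum_sub_distrib, ← Finset.smul_sum]

theorem pow_add_three_of_pow_three {R : Type*} [CommRing R] {β a b c : R}
    (hβ : β ^ 3 = a * β ^ 2 - b * β + c) (n : ℕ) :
    β ^ (n + 3) = a * β ^ (n + 2) - b * β ^ (n + 1) + c * β ^ n := by
  rw [pow_add, hβ]
  ring

theorem AdjoinRoot.linearIndependent_root_pow {K : Type*} [Field K] {f : K[X]} (hf : f ≠ 0)
    {m : ℕ} (hm : m ≤ f.natDegree) :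
    LinearIndependent K (fun i : Fin m => root f ^ (i : ℕ)) := by
  have h := (powerBasis hf).basis.linearIndependent.comp (Fin.castLE hm) (Fin.castLE_injective hm)
  rwa [PowerBasis.coe_basis, powerBasis_gen] at h

theorem AdjoinRoot.root_pow_three {R : Type*} [CommRing R] (p q r : R) :
    root (X ^ 3 - C p * X ^ 2 - C q * X - C r) ^ 3
      = algebraMap R _ p * root (X ^ 3 - C p * X ^ 2 - C q * X - C r) ^ 2
        + algebraMap R _ q * root (X ^ 3 - C p * X ^ 2 - C q * X - C r) + algebraMap R _ r := by
  have h := eval₂_root (X ^ 3 - C p * X ^ 2 - C q * X - C r)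
  simp only [eval₂_sub, eval₂_mul, eval₂_pow, eval₂_X, eval₂_C, ← algebraMap_eq] at h
  linear_combination h

theorem add_sq_pow_three_of_pow_three {R A : Type*} [CommRing R] [CommRing A] [Algebra R A]
    {α : A} {p q r : R}
    (hα : α ^ 3 = algebraMap R A p * α ^ 2 + algebraMap R A q * α + algebraMap R A r) (z : R) :
    (algebraMap R A z + α ^ 2) ^ 3
      = algebraMap R A (p ^ 2 + 2 * q + 3 * z) * (algebraMap R A z + α ^ 2) ^ 2
        - algebraMap R A (q ^ 2 - 2 * p * r + 2 * p ^ 2 * z + 4 * q * z + 3 * z ^ 2)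
          * (algebraMap R A z + α ^ 2)
        + algebraMap R A (r ^ 2 + q ^ 2 * z - 2 * p * r * z + p ^ 2 * z ^ 2 + 2 * q * z ^ 2
          + z ^ 3) := by
  simp only [map_add, map_sub, map_mul, map_pow, map_ofNat]
  linear_combination (α ^ 3 + algebraMap R A p * α ^ 2 - algebraMap R A q * α
    + algebraMap R A r) * hα

open Polynomial in
theorem cerruti_recurrence_general (p q r z : ℚ)
    (μ0 μ1 μ2 : ℕ → ℚ)
    (hμ : ∀ n : ℕ,
      (algebraMap ℚ (AdjoinRoot (X^3 - C p * X^2 - C q * X - C r : ℚ[X])) z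
          + (AdjoinRoot.root (X^3 - C p * X^2 - C q * X - C r : ℚ[X]))^2)^n
        = algebraMap ℚ _ (μ0 n)
          + algebraMap ℚ _ (μ1 n) * AdjoinRoot.root (X^3 - C p * X^2 - C q * X - C r : ℚ[X])
          + algebraMap ℚ _ (μ2 n) * (AdjoinRoot.root (X^3 - C p * X^2 - C q * X - C r : ℚ[X]))^2) :
    ∀ n : ℕ, ∀ s ∈ ({μ0, μ1, μ2} : Set (ℕ → ℚ)),
      s (n+3) = (p^2 + 2*q + 3*z) * s (n+2)
        - (q^2 - 2*p*r + 2*p^2*z + 4*q*z + 3*z^2) * s (n+1)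
        + (r^2 + q^2*z - 2*p*r*z + p^2*z^2 + 2*q*z^2 + z^3) * s n := by
  set f : ℚ[X] := X^3 - C p * X^2 - C q * X - C r
  have hdeg : f.natDegree = 3 := by unfold f; compute_degree!
  have hli := AdjoinRoot.linearIndependent_root_pow (f := f) (m := 3)
    (fun hf => by simp [hf] at hdeg) hdeg.ge
  have hcoord (m : ℕ) : (algebraMap ℚ _ z + AdjoinRoot.root f ^ 2) ^ m
      = ∑ i, ![μ0, μ1, μ2] i m • AdjoinRoot.root f ^ (i : ℕ) := by
    rw [hμ m]
    simp [Fin.sum_univ_three, Algebra.smul_def]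
  intro n s hs
  have hrec := pow_add_three_of_pow_three
    (add_sq_pow_three_of_pow_three (AdjoinRoot.root_pow_three p q r) z) n
  simp only [← Algebra.smul_def] at hrec
  rcases hs with rfl | rfl | rfl
  exacts [hli.coord_linear_recurrence hcoord hrec 0, hli.coord_linear_recurrence hcoord hrec 1,
    hli.coord_linear_recurrence hcoord hrec 2]

open Polynomial in
theorem cerruti_recurrence (p q r z : ℚ)
    (hf : Irreducible (X^3 - C p * X^2 - C q * X - C r : ℚ[X]))
    (μ0 μ1 μ2 : ℕ → ℚ)
    (hμ : ∀ n : ℕ,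
      (algebraMap ℚ (AdjoinRoot (X^3 - C p * X^2 - C q * X - C r : ℚ[X])) z
          + (AdjoinRoot.root (X^3 - C p * X^2 - C q * X - C r : ℚ[X]))^2)^n
        = algebraMap ℚ _ (μ0 n)
          + algebraMap ℚ _ (μ1 n) * AdjoinRoot.root (X^3 - C p * X^2 - C q * X - C r : ℚ[X])
          + algebraMap ℚ _ (μ2 n) * (AdjoinRoot.root (X^3 - C p * X^2 - C q * X - C r : ℚ[X]))^2) :
    ∀ n : ℕ, ∀ s ∈ ({μ0, μ1, μ2} : Set (ℕ → ℚ)),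
      s (n+3) = (p^2 + 2*q + 3*z) * s (n+2)
        - (q^2 - 2*p*r + 2*p^2*z + 4*q*z + 3*z^2) * s (n+1)
        + (r^2 + q^2*z - 2*p*r*z + p^2*z^2 + 2*q*z^2 + z^3) * s n :=
  cerruti_recurrence_general p q r z μ0 μ1 μ2 hμ
end

section
/- The three real roots of the Ramanujan cubic x³ + x² - 2x - 1 are 2cos(2π/7), 2cos(4π/7), and 2cos(8π/7). -/
/-!
If `7θ ∈ 2πℤ` then `cos 4θ = cos 3θ`; expanding both sides as polynomials in `c = cos θ`
gives `(c - 1)((2c)³ + (2c)² - 2(2c) - 1) = 0`, so `2 cos θ` is a root of the cubic unless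
`cos θ = 1`. For `θ = 2π/7, 4π/7, 8π/7` the values `cos θ` are distinct and less than `1`
(`cos (8π/7) = cos (6π/7)` and `cos` decreases on `[0, π]`), and a monic cubic with three
distinct roots is the product of the corresponding linear factors.
-/

open Real

theorem cubic_eq_mul_of_roots {R : Type*} [CommRing R] [NoZeroDivisors R] {p q r a b c : R}
    (hab : a ≠ b) (hac : a ≠ c) (hbc : b ≠ c)
    (ha : a ^ 3 + p * a ^ 2 + q * a + r = 0) (hb : b ^ 3 + p * b ^ 2 + q * b + r = 0)
    (hc : c ^ 3 + p * c ^ 2 + q * c + r = 0) (x : R) :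
    x ^ 3 + p * x ^ 2 + q * x + r = (x - a) * (x - b) * (x - c) := by
  have hab' : a ^ 2 + a * b + b ^ 2 + p * (a + b) + q = 0 := by
    refine (mul_eq_zero.mp ?_).resolve_left (sub_ne_zero.mpr hab)
    linear_combination ha - hb
  have hac' : a ^ 2 + a * c + c ^ 2 + p * (a + c) + q = 0 := by
    refine (mul_eq_zero.mp ?_).resolve_left (sub_ne_zero.mpr hac)
    linear_combination ha - hc
  have hsum : a + b + c + p = 0 := by
    refine (mul_eq_zero.mp ?_).resolve_left (sub_ne_zero.mpr hbc)
    linear_combination hab' - hac'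
  have he2 : a * b + b * c + c * a = q := by linear_combination (a + b) * hsum - hab'
  have he3 : a * b * c = -r := by linear_combination hc - c ^ 2 * hsum + c * he2
  linear_combination x ^ 2 * hsum - x * he2 + he3

theorem two_cos_ramanujan_cubic_eq_zero {θ : ℝ} (k : ℤ) (h7 : 7 * θ = k * (2 * π))
    (h1 : cos θ ≠ 1) :
    (2 * cos θ) ^ 3 + (2 * cos θ) ^ 2 - 2 * (2 * cos θ) - 1 = 0 := by
  have h43 : cos (4 * θ) = cos (3 * θ) := by
    rw [show 4 * θ = k * (2 * π) - 3 * θ by linarith, cos_int_mul_two_pi_sub]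
  have h4 : cos (4 * θ) = 2 * (2 * cos θ ^ 2 - 1) ^ 2 - 1 := by
    rw [show 4 * θ = 2 * (2 * θ) by ring, cos_two_mul, cos_two_mul]
  refine (mul_eq_zero.mp ?_).resolve_left (sub_ne_zero.mpr h1)
  linear_combination h43 - h4 + cos_three_mul θ

open Real in
theorem ramanujan_cubic_roots :
    ∀ x : ℝ, x^3 + x^2 - 2*x - 1
      = (x - 2*cos (2*π/7)) * (x - 2*cos (4*π/7)) * (x - 2*cos (8*π/7)) := by
  have hπ := pi_pos
  have h86 : cos (8 * π / 7) = cos (6 * π / 7) := by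
    rw [show 8 * π / 7 = 2 * π - 6 * π / 7 by ring, cos_two_pi_sub]
  have h2 : cos (2 * π / 7) < 1 := by
    simpa using cos_lt_cos_of_nonneg_of_le_pi le_rfl (by linarith) (by positivity)
  have h42 : cos (4 * π / 7) < cos (2 * π / 7) :=
    cos_lt_cos_of_nonneg_of_le_pi (by positivity) (by linarith) (by linarith)
  have h64 : cos (6 * π / 7) < cos (4 * π / 7) :=
    cos_lt_cos_of_nonneg_of_le_pi (by positivity) (by linarith) (by linarith)
  have root (θ : ℝ) (k : ℤ) (h7 : 7 * θ = k * (2 * π)) (h1 : cos θ < 1) :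
      (2 * cos θ) ^ 3 + 1 * (2 * cos θ) ^ 2 + -2 * (2 * cos θ) + -1 = 0 := by
    linear_combination two_cos_ramanujan_cubic_eq_zero k h7 h1.ne
  intro x
  linear_combination cubic_eq_mul_of_roots
    (by linarith : 2 * cos (4 * π / 7) < 2 * cos (2 * π / 7)).ne'
    (by linarith : 2 * cos (8 * π / 7) < 2 * cos (2 * π / 7)).ne'
    (by linarith : 2 * cos (8 * π / 7) < 2 * cos (4 * π / 7)).ne'
    (root (2 * π / 7) 1 (by push_cast; ring) h2)
    (root (4 * π / 7) 2 (by push_cast; ring) (by linarith))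
    (root (8 * π / 7) 4 (by push_cast; ring) (by linarith)) x
end
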